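/- For all α, β ∈ ℂ, θ ∈ [0,π], φ ∈ ℝ, the inner product of two super-coherent states of type L± with the same (θ,φ) equals ⟨|β,θ,φ⟩_{L±}, |α,θ,φ⟩_{L±}⟩ = e^{−|α|²/2 − |β|²/2 + conj(β)·α} · ( 1 − (sin θ/(2√2))·((conj(α) − conj(β))·e^{iφ} − (α − β)·e^{−iφ}) − (|α − β|²/2)·sin²(θ/2) ). -/

import Mathlib

open scoped InnerProductSpace ComplexConjugate

noncomputable section

/-- The Hilbert space `ℓ²(ℕ, ℂ)` of square-summable complex sequences. -/
abbrev H : Type := lp (fun _ : ℕ => ℂ) 2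

/-- The componentwise-sum inner product on fermion–boson states in `H × H`. -/
noncomputable def pinner (Φ Ψ : H × H) : ℂ := ⟪Φ.1, Ψ.1⟫_ℂ + ⟪Φ.2, Ψ.2⟫_ℂ

/-- The displaced Fock state `ψ0^α = D(α)|0⟩` as a coefficient sequence. -/
noncomputable def psi0 (α : ℂ) : ℕ → ℂ := fun n =>
  Complex.exp (-(‖α‖ ^ 2 : ℝ) / 2) * α ^ n / Real.sqrt n.factorial

/-- The displaced Fock state `ψ1^α = D(α)|1⟩` as a coefficient sequence. -/
noncomputable def psi1 (α : ℂ) : ℕ → ℂ := fun n =>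
  if n = 0 then -conj α * Complex.exp (-(‖α‖ ^ 2 : ℝ) / 2)
  else Complex.exp (-(‖α‖ ^ 2 : ℝ) / 2) * α ^ (n - 1) * ((n : ℂ) - (‖α‖ ^ 2 : ℝ)) /
    Real.sqrt n.factorial

/-- The super-coherent state `|α,θ,φ⟩_{L_ε}` (sign `ε = ±1`) as an element of `H × H`,
given square-summability witnesses for the displaced Fock states. -/
noncomputable def scL (θ φ : ℝ) (ε α : ℂ)
    (h0 : Memℓp (psi0 α) 2) (h1 : Memℓp (psi1 α) 2) : H × H :=
  ((Real.cos (θ / 2) : ℂ) • (⟨psi0 α, h0⟩ : H) +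
      ((Real.sin (θ / 2) : ℂ) * Complex.exp (φ * Complex.I) / Real.sqrt 2) •
        (⟨psi1 α, h1⟩ : H),
    (ε * ((Real.sin (θ / 2) : ℂ) * Complex.exp (φ * Complex.I) / Real.sqrt 2)) •
      (⟨psi0 α, h0⟩ : H))

/-! ### Auxiliary exponential-series lemmas -/

lemma normsq_cast' (α : ℂ) : ((‖α‖ ^ 2 : ℝ) : ℂ) = conj α * α := by
  rw [Complex.conj_mul']; norm_cast

lemma sumexp (z : ℂ) : Summable (fun n : ℕ => z ^ n / (n.factorial : ℂ)) :=
  NormedSpace.expSeries_div_summable z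

lemma tsumexp (z : ℂ) : ∑' n : ℕ, z ^ n / (n.factorial : ℂ) = Complex.exp z := by
  rw [Complex.exp_eq_exp_ℂ, NormedSpace.exp_eq_tsum_div]

lemma sumexp1 (z : ℂ) : Summable (fun n : ℕ => z ^ (n + 1) / ((n + 1).factorial : ℂ)) :=
  (summable_nat_add_iff 1).mpr (sumexp z)

lemma tsumexp1 (z : ℂ) : ∑' n : ℕ, z ^ (n + 1) / ((n + 1).factorial : ℂ) = Complex.exp z - 1 := by
  have h := Summable.tsum_eq_zero_add (sumexp z)
  rw [← tsumexp z, h]; simp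

lemma term2 (z : ℂ) (n : ℕ) :
    ((n : ℂ) + 1) * z ^ n / (((n + 1).factorial : ℕ) : ℂ) = z ^ n / (n.factorial : ℂ) := by
  have h1 : ((n : ℂ) + 1) ≠ 0 := by exact_mod_cast Nat.succ_ne_zero n
  have h2 : ((n.factorial : ℕ) : ℂ) ≠ 0 := by exact_mod_cast Nat.factorial_ne_zero n
  rw [Nat.factorial_succ]; push_cast; field_simp

lemma shiftN (z : ℂ) :
    (fun n : ℕ => (((n : ℕ) + 1 : ℕ) : ℂ) * z ^ ((n : ℕ) + 1) / (((n + 1).factorial : ℕ) : ℂ))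
      = fun n : ℕ => z * (z ^ n / (n.factorial : ℂ)) := by
  funext n
  push_cast
  rw [show ((n : ℂ) + 1) * z ^ (n + 1) = z * (((n : ℂ) + 1) * z ^ n) by ring, mul_div_assoc,
    term2]

lemma sumexpN (z : ℂ) : Summable (fun n : ℕ => (n : ℂ) * z ^ n / (n.factorial : ℂ)) := by
  apply (summable_nat_add_iff 1).mp
  have h := shiftN z
  push_cast at h
  simp only [Nat.cast_add, Nat.cast_one]
  rw [show (fun n : ℕ => ((n : ℂ) + 1) * z ^ (n + 1) / (((n + 1).factorial : ℕ) : ℂ)) = _ from h]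
  exact (sumexp z).mul_left z

lemma tsumexpN (z : ℂ) :
    ∑' n : ℕ, (n : ℂ) * z ^ n / (n.factorial : ℂ) = z * Complex.exp z := by
  rw [Summable.tsum_eq_zero_add (sumexpN z)]
  have h := shiftN z
  push_cast at h ⊢
  rw [show (fun n : ℕ => ((n : ℂ) + 1) * z ^ (n + 1) / (((n + 1).factorial : ℕ) : ℂ)) = _ from h]
  rw [tsum_mul_left, tsumexp]; simp

/-! ### Termwise computations for the displaced Fock states -/

/-- The Gaussian normalisation factor. -/
def Egauss (γ : ℂ) : ℂ := Complex.exp (-(‖γ‖ ^ 2 : ℝ) / 2)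

lemma conj_Egauss (γ : ℂ) : conj (Egauss γ) = Egauss γ := by
  unfold Egauss; rw [← Complex.exp_conj]; congr 1
  rw [map_div₀, map_neg, Complex.conj_ofReal, map_ofNat]

lemma sqrtfac_sq (n : ℕ) :
    ((Real.sqrt n.factorial : ℝ) : ℂ) ^ 2 = ((n.factorial : ℕ) : ℂ) := by
  norm_cast; rw [Real.sq_sqrt (by positivity)]

lemma sqrtfac_ne (n : ℕ) : ((Real.sqrt n.factorial : ℝ) : ℂ) ≠ 0 := by
  simp only [ne_eq, Complex.ofReal_eq_zero]; positivity

lemma psi0_zero (α : ℂ) : psi0 α 0 = Egauss α := by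
  simp [psi0, Egauss]

lemma psi1_zero (α : ℂ) : psi1 α 0 = -conj α * Egauss α := by
  simp [psi1, Egauss]

lemma psi0_succ (β : ℂ) (n : ℕ) :
    psi0 β (n + 1) = Egauss β * β ^ (n + 1) / (Real.sqrt (n + 1).factorial : ℝ) := rfl

lemma psi1_succ (α : ℂ) (n : ℕ) :
    psi1 α (n + 1) = Egauss α * α ^ n * (((n : ℂ) + 1) - conj α * α) /
      (Real.sqrt (n + 1).factorial : ℝ) := by
  rw [psi1, if_neg (Nat.succ_ne_zero n), Nat.add_sub_cancel, ← normsq_cast', Egauss]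
  push_cast
  ring_nf

lemma conj_psi0_succ (β : ℂ) (n : ℕ) :
    conj (psi0 β (n + 1))
      = Egauss β * (conj β) ^ (n + 1) / (Real.sqrt (n + 1).factorial : ℝ) := by
  rw [psi0_succ, map_div₀, map_mul, map_pow, Complex.conj_ofReal, conj_Egauss]

lemma conj_psi1_succ (β : ℂ) (n : ℕ) :
    conj (psi1 β (n + 1)) = Egauss β * (conj β) ^ n * (((n : ℂ) + 1) - conj β * β) /
      (Real.sqrt (n + 1).factorial : ℝ) := by
  rw [psi1_succ, map_div₀, map_mul, map_mul, map_pow, map_sub, map_add, map_mul,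
    Complex.conj_conj, Complex.conj_ofReal, conj_Egauss, map_natCast, map_one]
  ring

lemma term00 (α β : ℂ) (n : ℕ) : conj (psi0 β n) * psi0 α n
    = (Egauss α * Egauss β) * ((conj β * α) ^ n / (n.factorial : ℂ)) := by
  have hs := sqrtfac_sq n
  have hs0 := sqrtfac_ne n
  have hf0 : ((n.factorial : ℕ) : ℂ) ≠ 0 := by exact_mod_cast Nat.factorial_ne_zero n
  simp only [psi0, Egauss, map_div₀, map_mul, map_pow, Complex.conj_ofReal, ← Complex.exp_conj,
    map_neg, map_ofNat, Complex.ofReal_pow]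
  field_simp
  linear_combination -((conj β) ^ n * α ^ n) * hs

lemma term01_0 (α β : ℂ) :
    conj (psi0 β 0) * psi1 α 0 = (Egauss α * Egauss β) * (-conj α) := by
  rw [psi0_zero, psi1_zero, conj_Egauss]; ring

lemma term11_0 (α β : ℂ) :
    conj (psi1 β 0) * psi1 α 0 = (Egauss α * Egauss β) * (β * conj α) := by
  rw [psi1_zero, psi1_zero, map_mul, map_neg, Complex.conj_conj, conj_Egauss]; ring

lemma term01_succ (α β : ℂ) (n : ℕ) : conj (psi0 β (n + 1)) * psi1 α (n + 1)
    = (Egauss α * Egauss β) * (conj β * ((conj β * α) ^ n / (n.factorial : ℂ))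
        - conj α * ((conj β * α) ^ (n + 1) / ((n + 1).factorial : ℂ))) := by
  have hs := sqrtfac_sq (n + 1)
  have hf0 : ((n.factorial : ℕ) : ℂ) ≠ 0 := by exact_mod_cast Nat.factorial_ne_zero n
  have hfs : (((n + 1).factorial : ℕ) : ℂ) = ((n : ℂ) + 1) * ((n.factorial : ℕ) : ℂ) := by
    rw [Nat.factorial_succ]; push_cast; ring
  rw [conj_psi0_succ, psi1_succ]
  rw [div_mul_div_comm, ← sq, hs, hfs]
  have h1 : ((n : ℂ) + 1) ≠ 0 := by exact_mod_cast Nat.succ_ne_zero n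
  field_simp
  ring

lemma term11_succ (α β : ℂ) (n : ℕ) : conj (psi1 β (n + 1)) * psi1 α (n + 1)
    = (Egauss α * Egauss β) * ((n : ℂ) * (conj β * α) ^ n / (n.factorial : ℂ)
        + (conj β * α) ^ n / (n.factorial : ℂ)
        - (conj α * α + conj β * β) * ((conj β * α) ^ n / (n.factorial : ℂ))
        + (conj α * β) * ((conj β * α) ^ (n + 1) / ((n + 1).factorial : ℂ))) := by
  have hs := sqrtfac_sq (n + 1)
  have hf0 : ((n.factorial : ℕ) : ℂ) ≠ 0 := by exact_mod_cast Nat.factorial_ne_zero n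
  have hfs : (((n + 1).factorial : ℕ) : ℂ) = ((n : ℂ) + 1) * ((n.factorial : ℕ) : ℂ) := by
    rw [Nat.factorial_succ]; push_cast; ring
  rw [conj_psi1_succ, psi1_succ]
  rw [div_mul_div_comm, ← sq, hs, hfs]
  have h1 : ((n : ℂ) + 1) ≠ 0 := by exact_mod_cast Nat.succ_ne_zero n
  field_simp
  ring

/-! ### The four inner products of displaced Fock states -/

lemma inner00 (α β : ℂ) (h0α : Memℓp (psi0 α) 2) (h0β : Memℓp (psi0 β) 2) :
    ⟪(⟨psi0 β, h0β⟩ : H), (⟨psi0 α, h0α⟩ : H)⟫_ℂ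
      = Egauss α * Egauss β * Complex.exp (conj β * α) := by
  have h : ⟪(⟨psi0 β, h0β⟩ : H), (⟨psi0 α, h0α⟩ : H)⟫_ℂ
      = ∑' n : ℕ, conj (psi0 β n) * psi0 α n := by rw [lp.inner_eq_tsum]; simp [mul_comm]
  rw [h]
  calc ∑' n : ℕ, conj (psi0 β n) * psi0 α n
      = ∑' n : ℕ, (Egauss α * Egauss β) * ((conj β * α) ^ n / (n.factorial : ℂ)) :=
        tsum_congr (term00 α β)
    _ = Egauss α * Egauss β * Complex.exp (conj β * α) := by rw [tsum_mul_left, tsumexp]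

lemma sum01 (α β : ℂ) : Summable (fun n : ℕ => conj (psi0 β n) * psi1 α n) := by
  apply (summable_nat_add_iff 1).mp
  have h : (fun n : ℕ => conj (psi0 β (n + 1)) * psi1 α (n + 1))
      = fun n : ℕ => (Egauss α * Egauss β)
        * (conj β * ((conj β * α) ^ n / (n.factorial : ℂ))
          - conj α * ((conj β * α) ^ (n + 1) / ((n + 1).factorial : ℂ))) :=
    funext (term01_succ α β)
  rw [h]
  exact (((sumexp _).mul_left _).sub ((sumexp1 _).mul_left _)).mul_left _

lemma inner01 (α β : ℂ) (h0β : Memℓp (psi0 β) 2) (h1α : Memℓp (psi1 α) 2) :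
    ⟪(⟨psi0 β, h0β⟩ : H), (⟨psi1 α, h1α⟩ : H)⟫_ℂ
      = Egauss α * Egauss β * Complex.exp (conj β * α) * (conj β - conj α) := by
  have h : ⟪(⟨psi0 β, h0β⟩ : H), (⟨psi1 α, h1α⟩ : H)⟫_ℂ
      = ∑' n : ℕ, conj (psi0 β n) * psi1 α n := by rw [lp.inner_eq_tsum]; simp [mul_comm]
  rw [h, Summable.tsum_eq_zero_add (sum01 α β), term01_0]
  have h2 : (fun n : ℕ => conj (psi0 β (n + 1)) * psi1 α (n + 1))
      = fun n : ℕ => (Egauss α * Egauss β)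
        * (conj β * ((conj β * α) ^ n / (n.factorial : ℂ))
          - conj α * ((conj β * α) ^ (n + 1) / ((n + 1).factorial : ℂ))) :=
    funext (term01_succ α β)
  rw [h2, tsum_mul_left, Summable.tsum_sub ((sumexp _).mul_left _) ((sumexp1 _).mul_left _),
    tsum_mul_left, tsum_mul_left, tsumexp, tsumexp1]
  ring

lemma sum11 (α β : ℂ) : Summable (fun n : ℕ => conj (psi1 β n) * psi1 α n) := by
  apply (summable_nat_add_iff 1).mp
  have h : (fun n : ℕ => conj (psi1 β (n + 1)) * psi1 α (n + 1))
      = fun n : ℕ => (Egauss α * Egauss β)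
        * ((n : ℂ) * (conj β * α) ^ n / (n.factorial : ℂ)
          + (conj β * α) ^ n / (n.factorial : ℂ)
          - (conj α * α + conj β * β) * ((conj β * α) ^ n / (n.factorial : ℂ))
          + (conj α * β) * ((conj β * α) ^ (n + 1) / ((n + 1).factorial : ℂ))) :=
    funext (term11_succ α β)
  rw [h]
  exact ((((sumexpN _).add (sumexp _)).sub ((sumexp _).mul_left _)).add
    ((sumexp1 _).mul_left _)).mul_left _

lemma inner11 (α β : ℂ) (h1α : Memℓp (psi1 α) 2) (h1β : Memℓp (psi1 β) 2) :
    ⟪(⟨psi1 β, h1β⟩ : H), (⟨psi1 α, h1α⟩ : H)⟫_ℂ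
      = Egauss α * Egauss β * Complex.exp (conj β * α)
        * (1 + conj β * α + conj α * β - conj α * α - conj β * β) := by
  have h : ⟪(⟨psi1 β, h1β⟩ : H), (⟨psi1 α, h1α⟩ : H)⟫_ℂ
      = ∑' n : ℕ, conj (psi1 β n) * psi1 α n := by rw [lp.inner_eq_tsum]; simp [mul_comm]
  rw [h, Summable.tsum_eq_zero_add (sum11 α β), term11_0]
  have h2 : (fun n : ℕ => conj (psi1 β (n + 1)) * psi1 α (n + 1))
      = fun n : ℕ => (Egauss α * Egauss β)
        * ((n : ℂ) * (conj β * α) ^ n / (n.factorial : ℂ)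
          + (conj β * α) ^ n / (n.factorial : ℂ)
          - (conj α * α + conj β * β) * ((conj β * α) ^ n / (n.factorial : ℂ))
          + (conj α * β) * ((conj β * α) ^ (n + 1) / ((n + 1).factorial : ℂ))) :=
    funext (term11_succ α β)
  rw [h2, tsum_mul_left,
    Summable.tsum_add (((sumexpN _).add (sumexp _)).sub ((sumexp _).mul_left _))
      ((sumexp1 _).mul_left _),
    Summable.tsum_sub ((sumexpN _).add (sumexp _)) ((sumexp _).mul_left _),
    Summable.tsum_add (sumexpN _) (sumexp _), tsum_mul_left, tsum_mul_left,
    tsumexpN, tsumexp, tsumexp1]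
  ring

lemma inner10 (α β : ℂ) (h0α : Memℓp (psi0 α) 2) (h1β : Memℓp (psi1 β) 2) :
    ⟪(⟨psi1 β, h1β⟩ : H), (⟨psi0 α, h0α⟩ : H)⟫_ℂ
      = Egauss α * Egauss β * Complex.exp (conj β * α) * (α - β) := by
  rw [← inner_conj_symm, inner01 β α h0α h1β]
  rw [map_mul, map_mul, map_mul, map_sub, Complex.conj_conj, Complex.conj_conj,
    ← Complex.exp_conj, map_mul, Complex.conj_conj]
  rw [conj_Egauss, conj_Egauss]
  ring

/-! ### The main theorem -/

theorem supercoherent_inner_product (θ φ : ℝ) (hθ0 : 0 ≤ θ) (hθπ : θ ≤ Real.pi)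
    (ε : ℂ) (hε : ε = 1 ∨ ε = -1) (α β : ℂ)
    (h0α : Memℓp (psi0 α) 2) (h1α : Memℓp (psi1 α) 2)
    (h0β : Memℓp (psi0 β) 2) (h1β : Memℓp (psi1 β) 2) :
    pinner (scL θ φ ε β h0β h1β) (scL θ φ ε α h0α h1α) =
      Complex.exp ((-(‖α‖ ^ 2 : ℝ) / 2 : ℝ) + (-(‖β‖ ^ 2 : ℝ) / 2 : ℝ) + conj β * α) *
        (1 - ((Real.sin θ / (2 * Real.sqrt 2) : ℝ) : ℂ) *
              ((conj α - conj β) * Complex.exp (φ * Complex.I) -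
                (α - β) * Complex.exp (-φ * Complex.I)) -
          ((‖α - β‖ ^ 2 / 2 : ℝ) : ℂ) * ((Real.sin (θ / 2) ^ 2 : ℝ) : ℂ)) := by
  have hεc : conj ε * ε = 1 := by rcases hε with rfl | rfl <;> simp
  unfold pinner scL
  simp only [inner_add_left, inner_add_right, inner_smul_left, inner_smul_right,
    inner00, inner01, inner10, inner11]
  have hconjexp : conj (Complex.exp (↑φ * Complex.I)) = Complex.exp (-↑φ * Complex.I) := by
    rw [← Complex.exp_conj]; congr 1; simp
  have hEα : Complex.exp ((↑(-‖α‖ ^ 2 / 2 : ℝ) : ℂ)) = Egauss α := by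
    unfold Egauss; congr 1; push_cast; ring
  have hEβ : Complex.exp ((↑(-‖β‖ ^ 2 / 2 : ℝ) : ℂ)) = Egauss β := by
    unfold Egauss; congr 1; push_cast; ring
  have hab : ((‖α - β‖ ^ 2 / 2 : ℝ) : ℂ) = (conj α - conj β) * (α - β) / 2 := by
    rw [Complex.ofReal_div, normsq_cast', map_sub]; norm_num
  have hsin2 : Real.sin θ = 2 * Real.sin (θ/2) * Real.cos (θ/2) := by
    rw [← Real.sin_two_mul]; congr 1; ring
  have hsin : ((Real.sin θ / (2 * Real.sqrt 2) : ℝ) : ℂ)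
      = (Real.sin (θ/2) : ℂ) * (Real.cos (θ/2) : ℂ) / (Real.sqrt 2 : ℂ) := by
    rw [hsin2]; push_cast; field_simp
  have hcs : (Real.cos (θ/2) : ℂ)^2 + (Real.sin (θ/2) : ℂ)^2 = 1 := by
    norm_cast; exact Real.cos_sq_add_sin_sq (θ/2)
  have huv : Complex.exp (↑φ * Complex.I) * Complex.exp (-↑φ * Complex.I) = 1 := by
    rw [← Complex.exp_add, show (↑φ*Complex.I + -↑φ*Complex.I : ℂ) = 0 by ring,
      Complex.exp_zero]
  have hr2 : ((Real.sqrt 2 : ℝ) : ℂ)^2 = 2 := by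
    norm_cast; exact Real.sq_sqrt (by norm_num)
  rw [Complex.exp_add, Complex.exp_add, hEα, hEβ, hab, hsin]
  simp only [map_mul, map_div₀, Complex.conj_ofReal, hconjexp, Complex.ofReal_pow]
  set c : ℂ := (Real.cos (θ/2) : ℂ)
  set s : ℂ := (Real.sin (θ/2) : ℂ)
  set r : ℂ := ((Real.sqrt 2 : ℝ) : ℂ)
  set u : ℂ := Complex.exp (↑φ * Complex.I)
  set v : ℂ := Complex.exp (-↑φ * Complex.I)
  set K : ℂ := Egauss α * Egauss β * Complex.exp (conj β * α)
  have hr0 : r ≠ 0 := by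
    simp only [r, ne_eq, Complex.ofReal_eq_zero]
    positivity
  have hrinv : r⁻¹ = r / 2 := by
    rw [inv_eq_iff_eq_inv, eq_comm, inv_eq_iff_eq_inv, eq_comm, div_eq_mul_inv]
    field_simp
    linear_combination -hr2
  simp only [div_eq_mul_inv, hrinv]
  linear_combination K*hcs + (K*s^2*u*v*r^2/4)*hεc
    + (K*s^2*r^2*(2-(conj α - conj β)*(α-β))/4)*huv
    + (K*s^2*(2-(conj α - conj β)*(α-β))/4)*hr2
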